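/- arXiv:2105.05007 — 9 statements merged into one kernel-verified Lean document; each statement's English description precedes it below -/
import Mathlib

section
/- For a finite simple graph G with vertex set V and a subset V' ⊆ V, the closed neighborhood ideal N_G is contained in the ideal (V')R generated by the variables in V' if and only if V' is a dominating set for G. -/
/-- `D` is a dominating set of the graph `G`: every vertex is in `D` or adjacent to a
vertex of `D`. -/
def IsDomSet {V : Type*} (G : SimpleGraph V) (D : Finset V) : Prop :=
  ∀ v : V, v ∈ D ∨ ∃ u ∈ D, G.Adj u v

open scoped Classical in
/-- The closed neighborhood ideal of a finite simple graph `G`, generated in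
`K[X_v : v ∈ V]` by the products of the variables in the closed neighborhoods of the
vertices. -/
noncomputable def nbhdIdeal {V : Type*} [Fintype V] (K : Type*) [Field K]
    (G : SimpleGraph V) : Ideal (MvPolynomial V K) :=
  Ideal.span { m | ∃ i : V,
    m = ∏ j ∈ (insert i {j | G.Adj i j} : Set V).toFinset, MvPolynomial.X j }

namespace MvPolynomial

variable {σ R : Type*} [CommSemiring R]

theorem prod_X_eq_monomial_sum_single (T : Finset σ) :
    ∏ j ∈ T, (X j : MvPolynomial σ R) = monomial (∑ j ∈ T, Finsupp.single j 1) 1 :=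
  (monomial_sum_one T _).symm

theorem prod_X_mem_ideal_span_X_image_iff [Nontrivial R] {T : Finset σ} {s : Set σ} :
    ∏ j ∈ T, (X j : MvPolynomial σ R) ∈ Ideal.span (X '' s) ↔ ∃ i ∈ T, i ∈ s := by
  classical
  have hcoeff (i : σ) : (∑ j ∈ T, Finsupp.single j 1 : σ →₀ ℕ) i ≠ 0 ↔ i ∈ T := by
    simp [Finsupp.finsetSum_apply, Finsupp.single_apply]
  rw [prod_X_eq_monomial_sum_single, mem_ideal_span_X_image, support_monomial,
    if_neg one_ne_zero]
  simp only [Finset.mem_singleton, forall_eq, hcoeff, and_comm]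

end MvPolynomial

theorem SimpleGraph.exists_mem_closedNbhd_iff {V : Type*} (G : SimpleGraph V) (D : Set V)
    (v : V) :
    (∃ u ∈ insert v {u | G.Adj v u}, u ∈ D) ↔ v ∈ D ∨ ∃ u ∈ D, G.Adj u v := by
  rw [Set.exists_mem_insert]
  simp only [Set.mem_ofPred_eq, G.adj_comm v, and_comm]

/-- The closed neighborhood ideal `N_G` is contained in the ideal generated by the
variables indexed by `D` if and only if `D` is a dominating set of `G`. -/
theorem stmt0 {V : Type*} [Fintype V] (K : Type*) [Field K]
    (G : SimpleGraph V) (D : Finset V) :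
    nbhdIdeal K G ≤ Ideal.span (MvPolynomial.X '' (D : Set V)) ↔ IsDomSet G D := by
  simp only [nbhdIdeal, Ideal.span_le, Set.subset_def, Set.mem_ofPred_eq, forall_exists_index,
    forall_eq_apply_imp_iff, SetLike.mem_coe, MvPolynomial.prod_X_mem_ideal_span_X_image_iff,
    Set.mem_toFinset]
  exact forall_congr' fun v => G.exists_mem_closedNbhd_iff D v
end

section
/- For a finite simple graph G, the closed neighborhood ideal N_G equals the intersection, over all dominating sets V' of G, of the ideals (V')R generated by the variables in V'. -/
open MvPolynomial in
open scoped Classical in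
lemma nbhdIdeal_mem_iff {V : Type*} [Fintype V] (K : Type*) [Field K]
    (G : SimpleGraph V) (f : MvPolynomial V K) :
    f ∈ nbhdIdeal K G ↔ ∀ m ∈ f.support, ∃ i : V,
      ∀ j ∈ (insert i {j | G.Adj i j} : Set V).toFinset, (m : V →₀ ℕ) j ≠ 0 := by
  have hgen : { m : MvPolynomial V K | ∃ i : V,
      m = ∏ j ∈ (insert i {j | G.Adj i j} : Set V).toFinset, MvPolynomial.X j } =
      (fun s => monomial s (1 : K)) '' { e | ∃ i : V,
        e = ∑ j ∈ (insert i {j | G.Adj i j} : Set V).toFinset, Finsupp.single j 1 } := by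
    ext p
    constructor
    · rintro ⟨i, rfl⟩
      refine ⟨_, ⟨i, rfl⟩, ?_⟩
      dsimp only
      rw [monomial_sum_one]
      exact Finset.prod_congr rfl fun j _ => by rw [← X_pow_eq_monomial, pow_one]
    · rintro ⟨e, ⟨i, rfl⟩, rfl⟩
      refine ⟨i, ?_⟩
      dsimp only
      rw [monomial_sum_one]
      exact (Finset.prod_congr rfl fun j _ => by rw [← X_pow_eq_monomial, pow_one]).symm
  rw [nbhdIdeal, hgen, mem_ideal_span_monomial_image]
  refine forall₂_congr fun m hm => ?_
  constructor
  · rintro ⟨si, ⟨i, rfl⟩, hle⟩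
    refine ⟨i, fun j hj => ?_⟩
    have h1 : (∑ k ∈ (insert i {j | G.Adj i j} : Set V).toFinset,
        Finsupp.single k (1 : ℕ)) j = 1 := by
      rw [Finsupp.finset_sum_apply]
      rw [Finset.sum_eq_single j]
      · simp
      · intro b _ hb; simp [Finsupp.single_apply, hb]
      · intro h; exact absurd hj h
    have := hle j
    omega
  · rintro ⟨i, hi⟩
    refine ⟨_, ⟨i, rfl⟩, fun j => ?_⟩
    rw [Finsupp.finset_sum_apply]
    by_cases hj : j ∈ (insert i {j | G.Adj i j} : Set V).toFinset
    · have h1 : (∑ k ∈ (insert i {j | G.Adj i j} : Set V).toFinset,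
          (Finsupp.single k (1 : ℕ)) j) = 1 := by
        rw [Finset.sum_eq_single j]
        · simp
        · intro b _ hb; simp [Finsupp.single_apply, hb]
        · intro h; exact absurd hj h
      rw [h1]
      exact Nat.one_le_iff_ne_zero.2 (hi j hj)
    · have h0 : (∑ k ∈ (insert i {j | G.Adj i j} : Set V).toFinset,
          (Finsupp.single k (1 : ℕ)) j) = 0 := by
        apply Finset.sum_eq_zero
        intro b hb
        have hbj : b ≠ j := fun h => hj (h ▸ hb)
        simp [Finsupp.single_apply, hbj]
      rw [h0]
      exact Nat.zero_le _

/-- The closed neighborhood ideal `N_G` is the intersection, over all dominating sets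
`D` of `G`, of the ideals generated by the variables indexed by `D`. -/
theorem stmt1 {V : Type*} [Fintype V] (K : Type*) [Field K] (G : SimpleGraph V) :
    nbhdIdeal K G = ⨅ (D : Finset V) (_ : IsDomSet G D),
      Ideal.span (MvPolynomial.X '' (D : Set V)) := by
  classical
  ext f
  simp only [Ideal.mem_iInf, nbhdIdeal_mem_iff, MvPolynomial.mem_ideal_span_X_image]
  constructor
  · intro h D hD m hm
    obtain ⟨i, hi⟩ := h m hm
    rcases hD i with hiD | ⟨u, huD, hadj⟩
    · exact ⟨i, hiD, hi i (by simp)⟩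
    · exact ⟨u, huD, hi u (by simp [hadj.symm])⟩
  · intro h m hm
    by_contra hc
    push_neg at hc
    set D : Finset V := Finset.univ.filter (fun v => (m : V →₀ ℕ) v = 0) with hDdef
    have hD : IsDomSet G D := by
      intro i
      obtain ⟨j, hj, hj0⟩ := hc i
      simp only [Set.mem_toFinset, Set.mem_insert_iff, Set.mem_setOf_eq] at hj
      rcases hj with rfl | hadj
      · left; simp [hDdef, hj0]
      · right; exact ⟨j, by simp [hDdef, hj0], hadj.symm⟩
    obtain ⟨v, hvD, hv⟩ := h D hD m hm
    simp [hDdef] at hvD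
    exact hv hvD
end

section
/- For a finite simple graph G, the closed neighborhood ideal N_G equals the intersection, over all minimal dominating sets V' of G, of the ideals (V')R generated by the variables in V'. -/
/-- `D` is a minimal dominating set of `G`: it is dominating and properly contains no
dominating set. -/
def IsMinDomSet {V : Type*} (G : SimpleGraph V) (D : Finset V) : Prop :=
  IsDomSet G D ∧ ∀ D' ⊆ D, IsDomSet G D' → D' = D

/-!
Both ideals are monomial ideals, so it suffices to compare the monomials `x^m` they contain.
The monomial `x^m` lies in `N_G` iff the support of `m` contains a closed neighborhood, i.e. iff
the complement of the support is not a dominating set. Since every dominating set contains a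
minimal one, this happens iff the support of `m` meets every minimal dominating set `D`, i.e.
iff `x^m` lies in every ideal `(D)R`.
-/

open MvPolynomial

theorem Finsupp.sum_single_one_le_iff {σ : Type*} (F : Finset σ) (m : σ →₀ ℕ) :
    ∑ j ∈ F, Finsupp.single j 1 ≤ m ↔ F ⊆ m.support := by
  classical
  simp only [Finsupp.le_def, Finsupp.coe_finsetSum, Finset.sum_apply, Finsupp.single_apply,
    Finset.sum_ite_eq', Finset.subset_iff, Finsupp.mem_support_iff]
  refine ⟨fun h j hj => ?_, fun h j => ?_⟩
  · simpa [hj, Nat.one_le_iff_ne_zero] using h j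
  · split_ifs with hj
    · exact Nat.one_le_iff_ne_zero.mpr (h hj)
    · exact Nat.zero_le _

namespace MvPolynomial

variable {σ R : Type*} [CommSemiring R]

theorem prod_X_eq_monomial (F : Finset σ) :
    ∏ j ∈ F, (X j : MvPolynomial σ R) = monomial (∑ j ∈ F, Finsupp.single j 1) 1 := by
  rw [monomial_sum_one]
  rfl

theorem mem_ideal_span_range_prod_X {ι : Type*} (F : ι → Finset σ) {p : MvPolynomial σ R} :
    p ∈ Ideal.span (Set.range fun i => ∏ j ∈ F i, X j) ↔
      ∀ m ∈ p.support, ∃ i, F i ⊆ m.support := by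
  have hmonomial : (Set.range fun i => ∏ j ∈ F i, (X j : MvPolynomial σ R)) =
      (fun s => monomial s 1) '' Set.range fun i => ∑ j ∈ F i, Finsupp.single j 1 := by
    simp only [← Set.range_comp, Function.comp_def, prod_X_eq_monomial]
  simp only [hmonomial, mem_ideal_span_monomial_image, Set.exists_range_iff,
    Finsupp.sum_single_one_le_iff]

end MvPolynomial

section DominatingSets

variable {V : Type*} {G : SimpleGraph V}

theorem IsDomSet.mono {D D' : Finset V} (hD : IsDomSet G D) (h : D ⊆ D') :
    IsDomSet G D' := fun v =>
  (hD v).imp (@h v) fun ⟨u, hu, hadj⟩ => ⟨u, h hu, hadj⟩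

theorem IsDomSet.exists_isMinDomSet_subset {T : Finset V} (hT : IsDomSet G T) :
    ∃ D ⊆ T, IsMinDomSet G D := by
  induction T using Finset.strongInduction with
  | H T ih =>
    by_cases hmin : ∀ D ⊆ T, IsDomSet G D → D = T
    · exact ⟨T, subset_rfl, hT, hmin⟩
    · push Not at hmin
      obtain ⟨D, hDT, hD, hne⟩ := hmin
      obtain ⟨D', hD'D, hD'⟩ := ih D (hDT.ssubset_of_ne hne) hD
      exact ⟨D', hD'D.trans hDT, hD'⟩

theorem exists_isMinDomSet_subset_iff {T : Finset V} :
    (∃ D ⊆ T, IsMinDomSet G D) ↔ IsDomSet G T :=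
  ⟨fun ⟨_, hDT, hD⟩ => hD.1.mono hDT, IsDomSet.exists_isMinDomSet_subset⟩

theorem not_isDomSet_compl_iff [Fintype V] [DecidableEq V] {S : Finset V} :
    ¬ IsDomSet G Sᶜ ↔ ∃ i, insert i (G.neighborSet i) ⊆ S := by
  simp only [IsDomSet, not_forall, not_or, not_exists, not_and, Finset.mem_compl, not_not,
    Set.insert_subset_iff, Finset.mem_coe]
  refine exists_congr fun i => and_congr_right' ⟨fun h u hu => ?_, fun h u hu hadj => ?_⟩
  · exact by_contra fun huS => h u huS (G.adj_symm hu)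
  · exact hu (h (G.adj_symm hadj))

theorem exists_insert_neighborSet_subset_iff [Fintype V] [DecidableEq V] (S : Finset V) :
    (∃ i, insert i (G.neighborSet i) ⊆ S) ↔ ∀ D, IsMinDomSet G D → ∃ i ∈ D, i ∈ S := by
  rw [← not_isDomSet_compl_iff, ← exists_isMinDomSet_subset_iff]
  simp only [Finset.subset_compl_iff_disjoint_right, not_exists, not_and]
  exact forall_congr' fun D => by rw [imp_not_comm, ← Finset.not_disjoint_iff]

end DominatingSets

/-- The closed neighborhood ideal `N_G` is the intersection, over all minimal
dominating sets `D` of `G`, of the ideals generated by the variables indexed by `D`. -/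
theorem stmt2 {V : Type*} [Fintype V] (K : Type*) [Field K] (G : SimpleGraph V) :
    nbhdIdeal K G = ⨅ (D : Finset V) (_ : IsMinDomSet G D),
      Ideal.span (MvPolynomial.X '' (D : Set V)) := by
  classical
  have hrange : {m : MvPolynomial V K | ∃ i : V,
      m = ∏ j ∈ (insert i {j | G.Adj i j} : Set V).toFinset, X j} =
      Set.range fun i => ∏ j ∈ (insert i {j | G.Adj i j} : Set V).toFinset, X j :=
    Set.ext fun _ => exists_congr fun _ => eq_comm
  ext p
  simp only [nbhdIdeal, hrange, mem_ideal_span_range_prod_X, Set.toFinset_subset, Ideal.mem_iInf,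
    mem_ideal_span_X_image, Finset.mem_coe, ← Finsupp.mem_support_iff]
  refine ⟨fun h D hD m hm => ?_, fun h m hm => ?_⟩
  · exact (exists_insert_neighborSet_subset_iff m.support).1 (h m hm) D hD
  · exact (exists_insert_neighborSet_subset_iff m.support).2 fun D hD => h D hD m hm
end

section
/- For a finite simple graph G, the irreducible decomposition of N_G over the minimal dominating sets is irredundant: for every minimal dominating set V₀ of G, the intersection of the ideals (V')R taken over all minimal dominating sets V' ≠ V₀ is strictly larger than N_G (equivalently, it is not contained in (V₀)R). -/
/-- The decomposition of `N_G` over the minimal dominating sets is irredundant: for any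
minimal dominating set `D₀`, the intersection of the ideals of variables over the other
minimal dominating sets is strictly larger than `N_G`, and is not contained in the
ideal of variables indexed by `D₀`. -/
theorem stmt3 {V : Type*} [Fintype V] (K : Type*) [Field K] (G : SimpleGraph V)
    (D₀ : Finset V) (hD₀ : IsMinDomSet G D₀) :
    nbhdIdeal K G <
      (⨅ (D : Finset V) (_ : IsMinDomSet G D ∧ D ≠ D₀),
        Ideal.span (MvPolynomial.X '' (D : Set V))) ∧
    ¬ (⨅ (D : Finset V) (_ : IsMinDomSet G D ∧ D ≠ D₀),
        (Ideal.span (MvPolynomial.X '' (D : Set V)) : Ideal (MvPolynomial V K))) ≤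
      Ideal.span (MvPolynomial.X '' (D₀ : Set V)) := by
  classical
  -- `N_G ≤ (D)R` for every dominating set `D`
  have hNG_le : ∀ D : Finset V, IsDomSet G D →
      nbhdIdeal K G ≤ Ideal.span (MvPolynomial.X '' (D : Set V)) := by
    intro D hD
    refine Ideal.span_le.2 ?_
    rintro m ⟨i, rfl⟩
    obtain ⟨u, hu, hmemS⟩ : ∃ u ∈ D, u ∈ (insert i {j | G.Adj i j} : Set V) := by
      rcases hD i with h | ⟨u, hu, h⟩
      · exact ⟨i, h, Set.mem_insert _ _⟩
      · exact ⟨u, hu, Set.mem_insert_of_mem _ h.symm⟩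
    have hmem : u ∈ (insert i {j | G.Adj i j} : Set V).toFinset :=
      Set.mem_toFinset.2 hmemS
    rw [← Finset.mul_prod_erase _ _ hmem]
    exact Ideal.mul_mem_right _ _ (Ideal.subset_span ⟨u, hu, rfl⟩)
  -- the witness monomial: product of the variables outside `D₀`
  set m : MvPolynomial V K := ∏ v ∈ D₀ᶜ, MvPolynomial.X v with hm
  -- `m` lies in every `(D)R` for a minimal dominating set `D ≠ D₀`
  have hm_in : m ∈ ⨅ (D : Finset V) (_ : IsMinDomSet G D ∧ D ≠ D₀),
      Ideal.span (MvPolynomial.X '' (D : Set V)) := by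
    rw [Ideal.mem_iInf]
    intro D
    rw [Ideal.mem_iInf]
    rintro ⟨hD, hne⟩
    obtain ⟨v, hvD, hvD₀⟩ : ∃ v ∈ D, v ∉ D₀ := by
      by_contra h
      push_neg at h
      exact hne (hD₀.2 D (fun x hx => h x hx) hD.1)
    have hv : v ∈ D₀ᶜ := Finset.mem_compl.2 hvD₀
    rw [hm, ← Finset.mul_prod_erase _ _ hv]
    exact Ideal.mul_mem_right _ _ (Ideal.subset_span ⟨v, hvD, rfl⟩)
  -- `m` does not lie in `(D₀)R`
  have hm_not : m ∉ Ideal.span (MvPolynomial.X '' (D₀ : Set V)) := by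
    intro hmem
    set f : V → K := fun v => if v ∈ D₀ then 0 else 1 with hf
    have hker : Ideal.span (MvPolynomial.X '' (D₀ : Set V)) ≤
        RingHom.ker (MvPolynomial.eval f) := by
      refine Ideal.span_le.2 ?_
      rintro _ ⟨v, hv, rfl⟩
      simp [RingHom.mem_ker, hf, Finset.mem_coe.1 hv]
    have h0 : MvPolynomial.eval f m = 0 := hker hmem
    have h1 : MvPolynomial.eval f m = 1 := by
      rw [hm, map_prod]
      refine Finset.prod_eq_one fun v hv => ?_
      simp [hf, Finset.mem_compl.1 hv]
    exact one_ne_zero (h1 ▸ h0)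
  have hpart2 : ¬ (⨅ (D : Finset V) (_ : IsMinDomSet G D ∧ D ≠ D₀),
        (Ideal.span (MvPolynomial.X '' (D : Set V)) : Ideal (MvPolynomial V K))) ≤
      Ideal.span (MvPolynomial.X '' (D₀ : Set V)) := fun hle => hm_not (hle hm_in)
  refine ⟨lt_of_le_of_ne (le_iInf fun D => le_iInf fun hD => hNG_le D hD.1.1) ?_, hpart2⟩
  intro heq
  exact hm_not (hNG_le D₀ hD₀.1 (heq ▸ hm_in))
end

section
/- Let G and H be finite simple graphs on the same vertex set V = {X_1,...,X_d}. Then the closed neighborhood ideals satisfy N_G = N_H if and only if G and H have the same collection of minimal dominating sets. -/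
open scoped Classical in
/-- The closed neighborhood of a vertex, as a `Finset`. -/
noncomputable def nbF {V : Type*} [Fintype V] (G : SimpleGraph V) (i : V) : Finset V :=
  (insert i {j | G.Adj i j} : Set V).toFinset

lemma mem_nbF {V : Type*} [Fintype V] (G : SimpleGraph V) (i j : V) :
    j ∈ nbF G i ↔ j = i ∨ G.Adj i j := by
  classical
  simp [nbF, Set.mem_toFinset]

lemma nbhdIdeal_eq {V : Type*} [Fintype V] (K : Type*) [Field K] (G : SimpleGraph V) :
    nbhdIdeal K G =
      Ideal.span { m | ∃ i : V, m = ∏ j ∈ nbF G i, MvPolynomial.X j } := rfl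

/-- Membership of a square-free monomial in a square-free monomial ideal. -/
lemma prod_mem_span_iff {V : Type*} [Fintype V] (K : Type*) [Field K]
    (t : V → Finset V) (s : Finset V) :
    (∏ j ∈ s, MvPolynomial.X j : MvPolynomial V K) ∈
        Ideal.span { m | ∃ u : V, m = ∏ j ∈ t u, MvPolynomial.X j } ↔
      ∃ u : V, t u ⊆ s := by
  classical
  constructor
  · intro hmem
    by_contra hcon
    push_neg at hcon
    set f : MvPolynomial V K →+* K :=
      (MvPolynomial.eval (fun j => if j ∈ s then (1 : K) else 0)) with hf
    have hker : Ideal.span { m | ∃ u : V, m = ∏ j ∈ t u, MvPolynomial.X j } ≤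
        RingHom.ker f := by
      rw [Ideal.span_le]
      rintro m ⟨u, rfl⟩
      have := hcon u
      obtain ⟨j, hj, hjs⟩ := Finset.not_subset.mp this
      simp only [SetLike.mem_coe, RingHom.mem_ker, hf, map_prod, MvPolynomial.eval_X]
      exact Finset.prod_eq_zero hj (by simp [hjs])
    have h0 : f (∏ j ∈ s, MvPolynomial.X j) = 0 := hker hmem
    have h1 : f (∏ j ∈ s, MvPolynomial.X j) = 1 := by
      simp only [hf, map_prod, MvPolynomial.eval_X]
      exact Finset.prod_eq_one (fun j hj => by simp [hj])
    rw [h0] at h1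
    exact zero_ne_one h1
  · rintro ⟨u, hu⟩
    have h := Finset.prod_sdiff (f := fun j => (MvPolynomial.X j : MvPolynomial V K)) hu
    rw [← h]
    exact Ideal.mul_mem_left _ _ (Ideal.subset_span ⟨u, rfl⟩)

lemma ideal_eq_iff {V : Type*} [Fintype V] (K : Type*) [Field K] (G H : SimpleGraph V) :
    nbhdIdeal K G = nbhdIdeal K H ↔
      ((∀ v : V, ∃ u : V, nbF H u ⊆ nbF G v) ∧ (∀ v : V, ∃ u : V, nbF G u ⊆ nbF H v)) := by
  have key : ∀ G' H' : SimpleGraph V,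
      (nbhdIdeal K G' ≤ nbhdIdeal K H' ↔ ∀ v : V, ∃ u : V, nbF H' u ⊆ nbF G' v) := by
    intro G' H'
    rw [nbhdIdeal_eq, nbhdIdeal_eq, Ideal.span_le]
    constructor
    · intro h v
      have : (∏ j ∈ nbF G' v, MvPolynomial.X j : MvPolynomial V K) ∈
          Ideal.span { m | ∃ i : V, m = ∏ j ∈ nbF H' i, MvPolynomial.X j } :=
        h ⟨v, rfl⟩
      exact (prod_mem_span_iff K _ _).mp this
    · rintro h m ⟨v, rfl⟩
      exact (prod_mem_span_iff K _ _).mpr (h v)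
  rw [le_antisymm_iff, key, key, and_comm]

lemma dom_iff {V : Type*} [Fintype V] (G : SimpleGraph V) (D : Finset V) :
    IsDomSet G D ↔ ∀ v : V, ∃ u ∈ D, u ∈ nbF G v := by
  constructor
  · intro h v
    rcases h v with hv | ⟨u, hu, hadj⟩
    · exact ⟨v, hv, (mem_nbF G v v).mpr (Or.inl rfl)⟩
    · exact ⟨u, hu, (mem_nbF G v u).mpr (Or.inr hadj.symm)⟩
  · intro h v
    obtain ⟨u, hu, hmem⟩ := h v
    rcases (mem_nbF G v u).mp hmem with rfl | hadj
    · exact Or.inl hu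
    · exact Or.inr ⟨u, hu, hadj.symm⟩

/-- Every dominating set contains a minimal dominating set. -/
lemma exists_min_dom_subset {V : Type*} (G : SimpleGraph V) (D : Finset V)
    (hD : IsDomSet G D) : ∃ D' ⊆ D, IsMinDomSet G D' := by
  classical
  induction D using Finset.strongInductionOn with
  | _ D ih =>
    by_cases h : ∀ D' ⊆ D, IsDomSet G D' → D' = D
    · exact ⟨D, subset_rfl, hD, h⟩
    · push_neg at h
      obtain ⟨D', hsub, hdom, hne⟩ := h
      obtain ⟨D'', h1, h2⟩ := ih D' (ssubset_of_subset_of_ne hsub hne) hdom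
      exact ⟨D'', h1.trans hsub, h2⟩

/-- A refinement condition transfers dominating sets. -/
lemma dom_of_refine {V : Type*} [Fintype V] {G H : SimpleGraph V}
    (h : ∀ v : V, ∃ u : V, nbF H u ⊆ nbF G v) {D : Finset V}
    (hD : IsDomSet H D) : IsDomSet G D := by
  rw [dom_iff] at hD ⊢
  intro v
  obtain ⟨u, hu⟩ := h v
  obtain ⟨w, hw, hw2⟩ := hD u
  exact ⟨w, hw, hu hw2⟩

/-- Same minimal dominating sets imply the refinement condition. -/
lemma refine_of_minDom {V : Type*} [Fintype V] {G H : SimpleGraph V}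
    (h : ∀ D : Finset V, IsMinDomSet G D ↔ IsMinDomSet H D) :
    ∀ v : V, ∃ u : V, nbF H u ⊆ nbF G v := by
  classical
  intro v
  by_contra hcon
  push_neg at hcon
  have hdomC : IsDomSet H (nbF G v)ᶜ := by
    intro u
    obtain ⟨j, hj, hjs⟩ := Finset.not_subset.mp (hcon u)
    have hjC : j ∈ (nbF G v)ᶜ := Finset.mem_compl.mpr hjs
    rcases (mem_nbF H u j).mp hj with rfl | hadj
    · exact Or.inl hjC
    · exact Or.inr ⟨j, hjC, hadj.symm⟩
  obtain ⟨D', hsub, hmin⟩ := exists_min_dom_subset H _ hdomC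
  have hminG : IsMinDomSet G D' := (h D').mpr hmin
  obtain ⟨w, hw, hw2⟩ := (dom_iff G D').mp hminG.1 v
  exact Finset.mem_compl.mp (hsub hw) hw2

/-- Two finite graphs on a common vertex set have equal closed neighborhood ideals if
and only if they have the same minimal dominating sets. -/
theorem stmt5 {V : Type*} [Fintype V] (K : Type*) [Field K] (G H : SimpleGraph V) :
    nbhdIdeal K G = nbhdIdeal K H ↔
      (∀ D : Finset V, IsMinDomSet G D ↔ IsMinDomSet H D) := by
  rw [ideal_eq_iff]
  constructor
  · rintro ⟨h1, h2⟩ D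
    have hdom : ∀ D : Finset V, IsDomSet G D ↔ IsDomSet H D :=
      fun D => ⟨dom_of_refine h2, dom_of_refine h1⟩
    constructor
    · rintro ⟨hd, hm⟩
      exact ⟨(hdom D).mp hd, fun D' hs hD' => hm D' hs ((hdom D').mpr hD')⟩
    · rintro ⟨hd, hm⟩
      exact ⟨(hdom D).mpr hd, fun D' hs hD' => hm D' hs ((hdom D').mp hD')⟩
  · intro h
    exact ⟨refine_of_minDom h, refine_of_minDom (fun D => (h D).symm)⟩
end

section
/- If H is the K_1-corona of a finite simple graph G with vertex set {X_1,...,X_d}, then the closed neighborhood ideal of H in K[X_1,...,X_d,Y_1,...,Y_d] equals the ideal generated by the monomials X_1Y_1, X_2Y_2, ..., X_dY_d. -/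
/-- The `K₁`-corona of `G`: add to `G` a pendant vertex (whisker) attached to each
vertex of `G`.  The original vertices are `Sum.inl i` and the whisker vertices are
`Sum.inr i`. -/
def corona {V : Type*} (G : SimpleGraph V) : SimpleGraph (V ⊕ V) where
  Adj a b :=
    (∃ i j, a = Sum.inl i ∧ b = Sum.inl j ∧ G.Adj i j) ∨
    (∃ i, a = Sum.inl i ∧ b = Sum.inr i) ∨
    (∃ i, a = Sum.inr i ∧ b = Sum.inl i)
  symm := by
    constructor
    rintro a b (⟨i, j, rfl, rfl, h⟩ | ⟨i, rfl, rfl⟩ | ⟨i, rfl, rfl⟩)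
    · exact Or.inl ⟨j, i, rfl, rfl, h.symm⟩
    · exact Or.inr (Or.inr ⟨i, rfl, rfl⟩)
    · exact Or.inr (Or.inl ⟨i, rfl, rfl⟩)
  loopless := by
    constructor
    rintro a (⟨i, j, rfl, h1, h⟩ | ⟨i, rfl, h1⟩ | ⟨i, rfl, h1⟩)
    · obtain rfl := Sum.inl_injective h1
      exact G.loopless.irrefl i h
    · exact Sum.inl_ne_inr h1
    · exact Sum.inr_ne_inl h1

/-! The whisker `Yᵢ` has closed neighborhood `{Xᵢ, Yᵢ}`, which lies inside the closed
neighborhood of `Xᵢ`: so the generators coming from whiskers are exactly the `XᵢYᵢ`, and every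
generator coming from a vertex of `G` is a multiple of one of them. -/

open MvPolynomial

theorem nbhdIdeal_eq_span_prod_X_insert_neighborFinset {V : Type*} [Fintype V] [DecidableEq V]
    (K : Type*) [Field K] (G : SimpleGraph V) [DecidableRel G.Adj] :
    nbhdIdeal K G = Ideal.span {m | ∃ i, m = ∏ j ∈ insert i (G.neighborFinset i), X j} := by
  unfold nbhdIdeal
  congr! with m i
  ext j
  simp

section Corona

variable {V : Type*} (G : SimpleGraph V)

theorem corona_adj_inr_iff {i : V} {b : V ⊕ V} : (corona G).Adj (.inr i) b ↔ b = .inl i := by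
  simp [corona, eq_comm]

theorem corona_adj_inl_inr (i : V) : (corona G).Adj (.inl i) (.inr i) :=
  Or.inr (Or.inl ⟨i, rfl, rfl⟩)

variable {R : Type*} [CommSemiring R] [DecidableEq V] (i : V)

theorem prod_X_insert_neighborFinset_corona_inr [Fintype ((corona G).neighborSet (.inr i))] :
    ∏ j ∈ insert (.inr i) ((corona G).neighborFinset (.inr i)), X j =
      (X (.inl i) * X (.inr i) : MvPolynomial (V ⊕ V) R) := by
  have : (corona G).neighborFinset (.inr i) = {.inl i} := by
    ext b
    simp [corona_adj_inr_iff]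
  rw [this, Finset.prod_pair Sum.inr_ne_inl, mul_comm]

theorem X_inl_mul_X_inr_dvd_prod_X_insert_neighborFinset_corona
    [Fintype ((corona G).neighborSet (.inl i))] :
    (X (.inl i) * X (.inr i) : MvPolynomial (V ⊕ V) R) ∣
      ∏ j ∈ insert (.inl i) ((corona G).neighborFinset (.inl i)), X j := by
  rw [← Finset.prod_pair Sum.inl_ne_inr]
  refine Finset.prod_dvd_prod_of_subset _ _ _ (Finset.insert_subset_insert _ ?_)
  simpa using corona_adj_inl_inr G i

end Corona

/-- The closed neighborhood ideal of the `K₁`-corona `H` of a graph `G` on `d` vertices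
is generated by the `d` monomials `XᵢYᵢ`. -/
theorem stmt6 (d : ℕ) (K : Type*) [Field K] (G : SimpleGraph (Fin d)) :
    nbhdIdeal K (corona G) =
      Ideal.span { m : MvPolynomial (Fin d ⊕ Fin d) K | ∃ i : Fin d,
        m = MvPolynomial.X (Sum.inl i) * MvPolynomial.X (Sum.inr i) } := by
  classical
  rw [nbhdIdeal_eq_span_prod_X_insert_neighborFinset]
  apply le_antisymm <;> rw [Ideal.span_le]
  · rintro _ ⟨i | i, rfl⟩
    · exact Ideal.mem_of_dvd _ (X_inl_mul_X_inr_dvd_prod_X_insert_neighborFinset_corona G i)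
        (Ideal.subset_span ⟨i, rfl⟩)
    · rw [prod_X_insert_neighborFinset_corona_inr G]
      exact Ideal.subset_span ⟨i, rfl⟩
  · rintro _ ⟨i, rfl⟩
    exact Ideal.subset_span ⟨.inr i, (prod_X_insert_neighborFinset_corona_inr G i).symm⟩
end

section
/- If H is the K_1-corona of a finite simple graph G with vertex set {X_1,...,X_d}, then the closed neighborhood ideal N_H equals the intersection, over all 2^d choices of Z_i ∈ {X_i, Y_i} for i = 1,...,d, of the ideals (Z_1,...,Z_d)R. -/
/-! The closed neighbourhood of the whisker vertex `Yᵢ` is `{Xᵢ, Yᵢ}`, and every closed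
neighbourhood contains one of these pairs, so `N_H` is the edge ideal `(X₁Y₁, …, X_dY_d)` of a
perfect matching. Membership in a monomial ideal is decided monomial by monomial, and a monomial
is divisible by some `XᵢYᵢ` iff it involves a variable of every transversal `{Z₁, …, Z_d}`. -/

open MvPolynomial Finsupp

theorem exists_and_iff_forall_exists_ite {ι : Type*} {P Q : ι → Prop} :
    (∃ i, P i ∧ Q i) ↔ ∀ f : ι → Bool, ∃ i, if f i then P i else Q i := by
  classical
  refine ⟨fun ⟨i, hP, hQ⟩ f => ⟨i, by split <;> assumption⟩, fun h => ?_⟩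
  by_contra! hPQ
  obtain ⟨i, hi⟩ := h fun i => decide ¬P i
  by_cases hP : P i <;> simp_all

theorem Finsupp.single_add_single_le_iff {σ : Type*} {a b : σ} (hab : a ≠ b) {m : σ →₀ ℕ} :
    single a 1 + single b 1 ≤ m ↔ m a ≠ 0 ∧ m b ≠ 0 := by
  classical
  simp only [le_def, add_apply, single_apply, ← Nat.one_le_iff_ne_zero]
  refine ⟨fun h => ⟨by simpa [hab.symm] using h a, by simpa [hab] using h b⟩, fun ⟨ha, hb⟩ c => ?_⟩
  split_ifs with hac hbc <;> subst_vars
  · exact absurd rfl hab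
  all_goals omega

theorem MvPolynomial.span_X_mul_X_eq_iInf_span_X {R ι σ : Type*} [CommSemiring R]
    (a b : ι → σ) (hab : ∀ i, a i ≠ b i) :
    Ideal.span (Set.range fun i => (X (a i) * X (b i) : MvPolynomial σ R)) =
      ⨅ f : ι → Bool, Ideal.span (X '' Set.range fun i => if f i then a i else b i) := by
  have hgen : Set.range (fun i => (X (a i) * X (b i) : MvPolynomial σ R)) =
      (fun s => monomial s 1) '' Set.range fun i => single (a i) 1 + single (b i) 1 := by
    rw [← Set.range_comp]
    congr 1
    funext i
    simp [X, monomial_mul]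
  ext p
  simp only [hgen, Ideal.mem_iInf, mem_ideal_span_X_image, mem_ideal_span_monomial_image,
    Set.exists_range_iff, single_add_single_le_iff (hab _), exists_and_iff_forall_exists_ite,
    apply_ite (fun v => _ ≠ 0)]
  exact ⟨fun h f m hm => h m hm f, fun h m hm f => h f m hm⟩

section Corona

variable {V : Type*} (G : SimpleGraph V)

theorem corona_closedNbhd_inr (i : V) :
    (insert (Sum.inr i) {j | (corona G).Adj (Sum.inr i) j} : Set (V ⊕ V)) =
      {Sum.inr i, Sum.inl i} := by
  ext b
  simp [corona]

theorem corona_pair_subset_closedNbhd_inl (i : V) :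
    ({Sum.inl i, Sum.inr i} : Set (V ⊕ V)) ⊆
      insert (Sum.inl i) {j | (corona G).Adj (Sum.inl i) j} :=
  Set.insert_subset_insert <| Set.singleton_subset_iff.2 <| Or.inr <| Or.inl ⟨i, rfl, rfl⟩

theorem nbhdIdeal_corona [Fintype V] (K : Type*) [Field K] :
    nbhdIdeal K (corona G) =
      Ideal.span (Set.range fun i => (X (Sum.inl i) * X (Sum.inr i) : MvPolynomial (V ⊕ V) K)) := by
  classical
  have prod_inr (i : V)
      {_ : Fintype (insert (Sum.inr i) {j | (corona G).Adj (Sum.inr i) j} : Set (V ⊕ V))} :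
      ∏ j ∈ (insert (Sum.inr i) {j | (corona G).Adj (Sum.inr i) j} : Set (V ⊕ V)).toFinset,
        (X j : MvPolynomial (V ⊕ V) K) = X (Sum.inl i) * X (Sum.inr i) := by
    rw [Set.toFinset_congr (corona_closedNbhd_inr G i), Set.toFinset_insert,
      Set.toFinset_singleton, Finset.prod_pair Sum.inr_ne_inl, mul_comm]
  rw [nbhdIdeal]
  apply le_antisymm <;> rw [Ideal.span_le]
  · rintro _ ⟨i | i, rfl⟩
    · refine Ideal.mem_of_dvd _ ?_ (Ideal.subset_span ⟨i, rfl⟩)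
      dsimp only
      rw [← Finset.prod_pair Sum.inl_ne_inr]
      refine Finset.prod_dvd_prod_of_subset _ _ _ ?_
      simpa [Set.subset_toFinset] using corona_pair_subset_closedNbhd_inl G i
    · exact Ideal.subset_span ⟨i, (prod_inr i).symm⟩
  · rintro _ ⟨i, rfl⟩
    exact Ideal.subset_span ⟨Sum.inr i, (prod_inr i).symm⟩

end Corona

/-- The closed neighborhood ideal of the `K₁`-corona `H` of a graph `G` on `d` vertices
is the intersection, over all `2^d` choices of `Zᵢ ∈ {Xᵢ, Yᵢ}`, of the ideals
`(Z₁, …, Z_d)`. -/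
theorem stmt9 (d : ℕ) (K : Type*) [Field K] (G : SimpleGraph (Fin d)) :
    nbhdIdeal K (corona G) =
      ⨅ f : Fin d → Bool,
        Ideal.span { m : MvPolynomial (Fin d ⊕ Fin d) K | ∃ i : Fin d,
          m = MvPolynomial.X (if f i then Sum.inl i else Sum.inr i) } := by
  rw [nbhdIdeal_corona, span_X_mul_X_eq_iInf_span_X _ _ fun _ => Sum.inl_ne_inr]
  refine iInf_congr fun f => congrArg Ideal.span ?_
  ext m
  rw [← Set.range_comp, Set.mem_range, Set.mem_ofPred_eq]
  exact exists_congr fun _ => eq_comm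
end

section
/- Let G be a finite simple bipartite graph with no isolated vertices that is domination-unmixed. Then every minimal dominating set of G has the same size as a largest matching of G (i.e., the common size of the minimal dominating sets equals the matching number of G). -/
/-- A graph is domination-unmixed if all of its minimal dominating sets have the same
size. -/
def DomUnmixed {V : Type*} (G : SimpleGraph V) : Prop :=
  ∀ D D' : Finset V, IsMinDomSet G D → IsMinDomSet G D' → D.card = D'.card

/-- `M` is a matching of `G`: a set of edges of `G` that pairwise share no vertex. -/
def IsMatching' {V : Type*} (G : SimpleGraph V) (M : Finset (Sym2 V)) : Prop :=
  (∀ e ∈ M, e ∈ G.edgeSet) ∧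
  ∀ e ∈ M, ∀ f ∈ M, e ≠ f → ∀ v : V, ¬(v ∈ e ∧ v ∈ f)

/-- A vertex not covered by any edge of `M₀`. -/
def Unsat {V : Type*} (M₀ : Finset (Sym2 V)) (v : V) : Prop := ∀ e ∈ M₀, v ∉ e

lemma adj_of_mem_mem {V : Type*} {G : SimpleGraph V} {e : Sym2 V} (he : e ∈ G.edgeSet)
    {x y : V} (hx : x ∈ e) (hy : y ∈ e) (hxy : x ≠ y) : G.Adj x y := by
  obtain rfl := (Sym2.mem_and_mem_iff hxy).mp ⟨hx, hy⟩
  exact (SimpleGraph.mem_edgeSet _).mp he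

/-- Every dominating set contains a minimal dominating set. -/
lemma exists_minDom {V : Type*} [DecidableEq V] (G : SimpleGraph V) :
    ∀ (n : ℕ) (S : Finset V), S.card = n → IsDomSet G S → ∃ D, D ⊆ S ∧ IsMinDomSet G D := by
  intro n
  induction n using Nat.strong_induction_on with
  | _ n ih =>
    intro S hcard hS
    by_cases h : ∀ D' ⊆ S, IsDomSet G D' → D' = S
    · exact ⟨S, Finset.Subset.refl S, hS, h⟩
    · push_neg at h
      obtain ⟨D', h1, h2, h3⟩ := h
      have hlt : D'.card < n := hcard ▸ Finset.card_lt_card (Finset.ssubset_iff_subset_ne.mpr ⟨h1, h3⟩)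
      obtain ⟨D, hD1, hD2⟩ := ih _ hlt D' rfl h2
      exact ⟨D, hD1.trans h1, hD2⟩

/-- Every independent set extends to a maximal independent set, which is a minimal
dominating set. -/
lemma exists_indep_minDom {V : Type*} [Fintype V] [DecidableEq V] (G : SimpleGraph V)
    (S : Finset V) (hind : ∀ u ∈ S, ∀ v ∈ S, ¬ G.Adj u v) :
    ∃ I, S ⊆ I ∧ IsMinDomSet G I := by
  classical
  set 𝒮 := Finset.univ.powerset.filter
    (fun T => S ⊆ T ∧ ∀ u ∈ T, ∀ v ∈ T, ¬ G.Adj u v) with h𝒮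
  have hne : 𝒮.Nonempty := by
    refine ⟨S, ?_⟩
    rw [h𝒮, Finset.mem_filter, Finset.mem_powerset]
    exact ⟨Finset.subset_univ S, Finset.Subset.refl S, hind⟩
  obtain ⟨I, hImem, hmax⟩ := 𝒮.exists_max_image Finset.card hne
  rw [h𝒮, Finset.mem_filter] at hImem
  obtain ⟨-, hSI, hIind⟩ := hImem
  have hdom : IsDomSet G I := by
    intro v
    by_cases hv : v ∈ I
    · exact Or.inl hv
    · right
      by_contra hcon
      push_neg at hcon
      have hins : insert v I ∈ 𝒮 := by
        rw [h𝒮, Finset.mem_filter, Finset.mem_powerset]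
        refine ⟨Finset.subset_univ _, hSI.trans (Finset.subset_insert _ _), ?_⟩
        intro a ha b hb hadj
        rcases Finset.mem_insert.mp ha with rfl | ha'
        · rcases Finset.mem_insert.mp hb with rfl | hb'
          · exact G.irrefl hadj
          · exact hcon b hb' hadj.symm
        · rcases Finset.mem_insert.mp hb with rfl | hb'
          · exact hcon a ha' hadj
          · exact hIind a ha' b hb' hadj
      have h1 := hmax _ hins
      have h2 : (insert v I).card = I.card + 1 := Finset.card_insert_of_notMem hv
      omega
  refine ⟨I, hSI, hdom, ?_⟩
  intro D' hsub hdom'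
  refine Finset.Subset.antisymm hsub ?_
  intro v hv
  by_contra hvD'
  rcases hdom' v with h | ⟨u, hu, hadj⟩
  · exact hvD' h
  · exact hIind u (hsub hu) v hv hadj

lemma exists_max_matching {V : Type*} [Fintype V] [DecidableEq V] (G : SimpleGraph V) :
    ∃ M₀, IsMatching' G M₀ ∧ ∀ M, IsMatching' G M → M.card ≤ M₀.card := by
  classical
  set ℳ := G.edgeFinset.powerset.filter (fun M => IsMatching' G M) with hℳ
  have hne : ℳ.Nonempty := by
    refine ⟨∅, ?_⟩
    rw [hℳ, Finset.mem_filter, Finset.mem_powerset]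
    exact ⟨Finset.empty_subset _, by simp [IsMatching'], by simp [IsMatching']⟩
  obtain ⟨M₀, hmem, hmax⟩ := ℳ.exists_max_image Finset.card hne
  rw [hℳ, Finset.mem_filter] at hmem
  refine ⟨M₀, hmem.2, ?_⟩
  intro M hM
  apply hmax
  rw [hℳ, Finset.mem_filter, Finset.mem_powerset]
  exact ⟨fun e he => SimpleGraph.mem_edgeFinset.mpr (hM.1 e he), hM⟩

lemma noadd {V : Type*} [DecidableEq V] {G : SimpleGraph V} {M₀ : Finset (Sym2 V)}
    (hM₀ : IsMatching' G M₀) (hmax : ∀ M, IsMatching' G M → M.card ≤ M₀.card)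
    {u v : V} (huv : G.Adj u v) (hu : Unsat M₀ u) (hv : Unsat M₀ v) : False := by
  have hnotmem : s(u,v) ∉ M₀ := fun h => hu _ h (Sym2.mem_mk_left u v)
  have hmatch : IsMatching' G (insert s(u,v) M₀) := by
    constructor
    · intro e he
      rcases Finset.mem_insert.mp he with rfl | he
      · exact huv
      · exact hM₀.1 e he
    · intro e he f hf hef x hx
      obtain ⟨hxe, hxf⟩ := hx
      rcases Finset.mem_insert.mp he with rfl | he'
      · rcases Finset.mem_insert.mp hf with rfl | hf'
        · exact hef rfl
        · rcases Sym2.mem_iff.mp hxe with rfl | rfl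
          · exact hu f hf' hxf
          · exact hv f hf' hxf
      · rcases Finset.mem_insert.mp hf with rfl | hf'
        · rcases Sym2.mem_iff.mp hxf with rfl | rfl
          · exact hu e he' hxe
          · exact hv e he' hxe
        · exact hM₀.2 e he' f hf' hef x ⟨hxe, hxf⟩
  have h1 := hmax _ hmatch
  rw [Finset.card_insert_of_notMem hnotmem] at h1
  omega

lemma noaug {V : Type*} [DecidableEq V] {G : SimpleGraph V} {M₀ : Finset (Sym2 V)}
    (hM₀ : IsMatching' G M₀) (hmax : ∀ M, IsMatching' G M → M.card ≤ M₀.card)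
    {u v w w' : V} (huv : s(u,v) ∈ M₀) (huw : G.Adj u w) (hvw' : G.Adj v w')
    (hw : Unsat M₀ w) (hw' : Unsat M₀ w') : w = w' := by
  by_contra hww
  have hadjuv : G.Adj u v := (SimpleGraph.mem_edgeSet _).mp (hM₀.1 _ huv)
  have husat : ∀ e ∈ M₀, e ≠ s(u,v) → u ∉ e := fun e he hne hue =>
    hM₀.2 e he _ huv hne u ⟨hue, Sym2.mem_mk_left u v⟩
  have hvsat : ∀ e ∈ M₀, e ≠ s(u,v) → v ∉ e := fun e he hne hve =>
    hM₀.2 e he _ huv hne v ⟨hve, Sym2.mem_mk_right u v⟩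
  have hwv : w ≠ v := fun h => hw _ huv (h ▸ Sym2.mem_mk_right u v)
  have hw'u : w' ≠ u := fun h => hw' _ huv (h ▸ Sym2.mem_mk_left u v)
  have hE1E2 : s(u,w) ≠ s(v,w') := by
    intro h
    rcases Sym2.eq_iff.mp h with ⟨h1, _⟩ | ⟨h1, _⟩
    · exact hadjuv.ne h1
    · exact hw'u h1.symm
  have disj1 : ∀ f ∈ M₀.erase s(u,v), ∀ x, x ∈ s(u,w) → x ∉ f := by
    intro f hf x hx hxf
    obtain ⟨hfne, hfM⟩ := Finset.mem_erase.mp hf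
    rcases Sym2.mem_iff.mp hx with rfl | rfl
    · exact husat f hfM hfne hxf
    · exact hw f hfM hxf
  have disj2 : ∀ f ∈ M₀.erase s(u,v), ∀ x, x ∈ s(v,w') → x ∉ f := by
    intro f hf x hx hxf
    obtain ⟨hfne, hfM⟩ := Finset.mem_erase.mp hf
    rcases Sym2.mem_iff.mp hx with rfl | rfl
    · exact hvsat f hfM hfne hxf
    · exact hw' f hfM hxf
  have disj12 : ∀ x, x ∈ s(u,w) → x ∉ s(v,w') := by
    intro x hx hx'
    rcases Sym2.mem_iff.mp hx with rfl | rfl <;> rcases Sym2.mem_iff.mp hx' with h | h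
    · exact hadjuv.ne h
    · exact hw'u h.symm
    · exact hwv h
    · exact hww h
  have hmatch : IsMatching' G (insert s(u,w) (insert s(v,w') (M₀.erase s(u,v)))) := by
    constructor
    · intro e he
      rcases Finset.mem_insert.mp he with rfl | he
      · exact huw
      rcases Finset.mem_insert.mp he with rfl | he
      · exact hvw'
      · exact hM₀.1 e (Finset.mem_of_mem_erase he)
    · intro e he f hf hef x hx
      obtain ⟨hxe, hxf⟩ := hx
      rcases Finset.mem_insert.mp he with rfl | he
      · rcases Finset.mem_insert.mp hf with rfl | hf
        · exact hef rfl
        rcases Finset.mem_insert.mp hf with rfl | hf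
        · exact disj12 x hxe hxf
        · exact disj1 f hf x hxe hxf
      rcases Finset.mem_insert.mp he with rfl | he
      · rcases Finset.mem_insert.mp hf with rfl | hf
        · exact disj12 x hxf hxe
        rcases Finset.mem_insert.mp hf with rfl | hf
        · exact hef rfl
        · exact disj2 f hf x hxe hxf
      · rcases Finset.mem_insert.mp hf with rfl | hf
        · exact disj1 e he x hxf hxe
        rcases Finset.mem_insert.mp hf with rfl | hf
        · exact disj2 e he x hxf hxe
        · exact hM₀.2 e (Finset.mem_of_mem_erase he) f (Finset.mem_of_mem_erase hf) hef x ⟨hxe, hxf⟩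
  have h1 : s(v,w') ∉ M₀.erase s(u,v) := fun h =>
    disj2 _ h v (Sym2.mem_mk_left v w') (Sym2.mem_mk_left v w')
  have h2 : s(u,w) ∉ insert s(v,w') (M₀.erase s(u,v)) := by
    intro h
    rcases Finset.mem_insert.mp h with h | h
    · exact hE1E2 h
    · exact disj1 _ h u (Sym2.mem_mk_left u w) (Sym2.mem_mk_left u w)
  have hle := hmax _ hmatch
  rw [Finset.card_insert_of_notMem h2, Finset.card_insert_of_notMem h1,
    Finset.card_erase_of_mem huv] at hle
  have hpos : 1 ≤ M₀.card := Finset.card_pos.mpr ⟨_, huv⟩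
  omega

open Classical in
noncomputable def pickUN {V : Type*} (G : SimpleGraph V) (M₀ : Finset (Sym2 V))
    (e : Sym2 V) : V :=
  if h : ∃ x, x ∈ e ∧ ∃ y, G.Adj x y ∧ Unsat M₀ y then h.choose else e.out.1

lemma pickUN_mem {V : Type*} (G : SimpleGraph V) (M₀ : Finset (Sym2 V)) (e : Sym2 V) :
    pickUN G M₀ e ∈ e := by
  rw [pickUN]
  by_cases h : ∃ x, x ∈ e ∧ ∃ y, G.Adj x y ∧ Unsat M₀ y
  · rw [dif_pos h]; exact h.choose_spec.1
  · rw [dif_neg h]; exact Sym2.out_fst_mem e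

lemma pickUN_spec {V : Type*} {G : SimpleGraph V} {M₀ : Finset (Sym2 V)} {e : Sym2 V}
    (h : ∃ x, x ∈ e ∧ ∃ y, G.Adj x y ∧ Unsat M₀ y) :
    ∃ y, G.Adj (pickUN G M₀ e) y ∧ Unsat M₀ y := by
  rw [pickUN, dif_pos h]
  exact h.choose_spec.2

/-- From a maximum matching we get a dominating set of at most the same size. -/
lemma exists_dom_le {V : Type*} [DecidableEq V] {G : SimpleGraph V}
    (hiso : ∀ v : V, ∃ w, G.Adj v w)
    {M₀ : Finset (Sym2 V)} (hM₀ : IsMatching' G M₀)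
    (hmax : ∀ M, IsMatching' G M → M.card ≤ M₀.card) :
    ∃ S : Finset V, IsDomSet G S ∧ S.card ≤ M₀.card := by
  classical
  refine ⟨M₀.image (pickUN G M₀), ?_, Finset.card_image_le⟩
  intro v
  by_cases hvU : Unsat M₀ v
  · right
    obtain ⟨w, hadj⟩ := hiso v
    have hwsat : ¬ Unsat M₀ w := fun hw => noadd hM₀ hmax hadj hvU hw
    rw [Unsat] at hwsat
    push_neg at hwsat
    obtain ⟨e, he, hwe⟩ := hwsat
    have hex : ∃ x, x ∈ e ∧ ∃ y, G.Adj x y ∧ Unsat M₀ y := ⟨w, hwe, v, hadj.symm, hvU⟩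
    obtain ⟨y, hcy, hyU⟩ := pickUN_spec hex
    by_cases hcw : pickUN G M₀ e = w
    · exact ⟨pickUN G M₀ e, Finset.mem_image_of_mem _ he, hcw ▸ hadj.symm⟩
    · have hwc : w ≠ pickUN G M₀ e := fun h => hcw h.symm
      have heq : e = s(w, pickUN G M₀ e) :=
        (Sym2.mem_and_mem_iff hwc).mp ⟨hwe, pickUN_mem G M₀ e⟩
      rw [heq] at he
      have hvy : v = y := noaug hM₀ hmax he hadj.symm hcy hvU hyU
      exact ⟨pickUN G M₀ e, Finset.mem_image_of_mem _ (heq ▸ he), by rw [hvy]; exact hcy⟩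
  · rw [Unsat] at hvU
    push_neg at hvU
    obtain ⟨e, he, hve⟩ := hvU
    by_cases hcv : pickUN G M₀ e = v
    · exact Or.inl (hcv ▸ Finset.mem_image_of_mem _ he)
    · exact Or.inr ⟨pickUN G M₀ e, Finset.mem_image_of_mem _ he,
        adj_of_mem_mem (hM₀.1 e he) (pickUN_mem G M₀ e) hve hcv⟩

open Classical in
noncomputable def pickIn {V : Type*} (V₁ : Finset V) (e : Sym2 V) : V :=
  if h : ∃ x, x ∈ e ∧ x ∈ V₁ then h.choose else e.out.1

lemma pickIn_spec {V : Type*} {V₁ : Finset V} {e : Sym2 V}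
    (h : ∃ x, x ∈ e ∧ x ∈ V₁) : pickIn V₁ e ∈ e ∧ pickIn V₁ e ∈ V₁ := by
  rw [pickIn, dif_pos h]
  exact h.choose_spec

lemma exists_mem_side {V : Type*} {G : SimpleGraph V} {V₁ V₂ : Finset V}
    (hbipadj : ∀ v w : V, G.Adj v w → (v ∈ V₁ ∧ w ∈ V₂) ∨ (v ∈ V₂ ∧ w ∈ V₁))
    {e : Sym2 V} (he : e ∈ G.edgeSet) : ∃ x, x ∈ e ∧ x ∈ V₁ := by
  induction e using Sym2.ind with
  | _ a b =>
    have hadj : G.Adj a b := (SimpleGraph.mem_edgeSet _).mp he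
    rcases hbipadj a b hadj with ⟨h1, _⟩ | ⟨_, h2⟩
    · exact ⟨a, Sym2.mem_mk_left a b, h1⟩
    · exact ⟨b, Sym2.mem_mk_right a b, h2⟩

/-- In a finite bipartite graph with no isolated vertices that is domination-unmixed,
the size of every minimal dominating set equals the matching number: there is a
matching of that size, and no matching is larger. -/
theorem stmt13 {V : Type*} [Fintype V] [DecidableEq V] (G : SimpleGraph V)
    (hbip : ∃ V₁ V₂ : Finset V, Disjoint V₁ V₂ ∧ V₁ ∪ V₂ = Finset.univ ∧
      ∀ v w : V, G.Adj v w → (v ∈ V₁ ∧ w ∈ V₂) ∨ (v ∈ V₂ ∧ w ∈ V₁))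
    (hiso : ∀ v : V, ∃ w, G.Adj v w)
    (hunm : DomUnmixed G)
    (D : Finset V) (hD : IsMinDomSet G D) :
    (∃ M : Finset (Sym2 V), IsMatching' G M ∧ M.card = D.card) ∧
    (∀ M : Finset (Sym2 V), IsMatching' G M → M.card ≤ D.card) := by
  classical
  obtain ⟨V₁, V₂, hdisj, hcover, hbipadj⟩ := hbip
  have part2 : ∀ M : Finset (Sym2 V), IsMatching' G M → M.card ≤ D.card := by
    intro M hM
    have hpick : ∀ e ∈ M, pickIn V₁ e ∈ e ∧ pickIn V₁ e ∈ V₁ := fun e he =>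
      pickIn_spec (exists_mem_side hbipadj (hM.1 e he))
    have hinj : Set.InjOn (pickIn V₁) ↑M := by
      intro e he f hf hsame
      by_contra hef
      exact hM.2 e he f hf hef _ ⟨(hpick e he).1, hsame ▸ (hpick f hf).1⟩
    have hcard : (M.image (pickIn V₁)).card = M.card := Finset.card_image_of_injOn hinj
    have hindep : ∀ a ∈ M.image (pickIn V₁), ∀ b ∈ M.image (pickIn V₁), ¬ G.Adj a b := by
      intro a ha b hb hadj
      obtain ⟨e, he, rfl⟩ := Finset.mem_image.mp ha
      obtain ⟨f, hf, rfl⟩ := Finset.mem_image.mp hb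
      rcases hbipadj _ _ hadj with ⟨_, h2⟩ | ⟨h2, _⟩
      · exact Finset.disjoint_left.mp hdisj (hpick f hf).2 h2
      · exact Finset.disjoint_left.mp hdisj (hpick e he).2 h2
    obtain ⟨I, hsub, hImin⟩ := exists_indep_minDom G _ hindep
    have heq := hunm I D hImin hD
    calc M.card = (M.image (pickIn V₁)).card := hcard.symm
      _ ≤ I.card := Finset.card_le_card hsub
      _ = D.card := heq
  refine ⟨?_, part2⟩
  obtain ⟨M₀, hM₀, hmax⟩ := exists_max_matching G
  obtain ⟨S, hSdom, hSle⟩ := exists_dom_le hiso hM₀ hmax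
  obtain ⟨D₀, hD₀sub, hD₀min⟩ := exists_minDom G S.card S rfl hSdom
  have h1 : D.card = D₀.card := hunm D D₀ hD hD₀min
  have h2 : D₀.card ≤ S.card := Finset.card_le_card hD₀sub
  have h3 := part2 M₀ hM₀
  exact ⟨M₀, hM₀, le_antisymm h3 (by omega)⟩
end

section
/- Let G be a finite simple bipartite graph with no isolated vertices and bipartition V = V_1 ∪ V_2. If G is domination-unmixed, then |V_1| = |V_2|. -/
/-- In a finite bipartite graph with no isolated vertices with bipartition
`V = V₁ ∪ V₂`, if the graph is domination-unmixed then the two parts have the same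
size. -/
theorem stmt14 {V : Type*} [Fintype V] [DecidableEq V] (G : SimpleGraph V)
    (V₁ V₂ : Finset V) (hdis : Disjoint V₁ V₂) (hun : V₁ ∪ V₂ = Finset.univ)
    (hbi : ∀ v w : V, G.Adj v w → (v ∈ V₁ ∧ w ∈ V₂) ∨ (v ∈ V₂ ∧ w ∈ V₁))
    (hiso : ∀ v : V, ∃ w, G.Adj v w)
    (hunm : DomUnmixed G) :
    V₁.card = V₂.card := by

  -- Every vertex is in V₁ or V₂
  have hmem : ∀ v : V, v ∈ V₁ ∨ v ∈ V₂ := by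
    intro v
    have : v ∈ V₁ ∪ V₂ := by rw [hun]; exact Finset.mem_univ v
    simpa [Finset.mem_union] using this
  have hnb : ∀ v : V, v ∈ V₁ → v ∉ V₂ := fun v hv hv2 =>
    (Finset.disjoint_left.mp hdis) hv hv2
  -- key lemma, symmetric in the parts
  have key : ∀ (A B : Finset V), (∀ v : V, v ∈ A ∨ v ∈ B) →
      (∀ v, v ∈ A → v ∉ B) →
      (∀ v w : V, G.Adj v w → (v ∈ A ∧ w ∈ B) ∨ (v ∈ B ∧ w ∈ A)) →
      IsMinDomSet G A := by
    intro A B hm hd hb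
    constructor
    · intro v
      rcases hm v with hv | hv
      · exact Or.inl hv
      · obtain ⟨w, hw⟩ := hiso v
        rcases hb v w hw with ⟨hvA, _⟩ | ⟨_, hwA⟩
        · exact Or.inl hvA
        · exact Or.inr ⟨w, hwA, hw.symm⟩
    · intro D' hsub hdom
      apply Finset.Subset.antisymm hsub
      intro u hu
      rcases hdom u with h | ⟨w, hwD, hadj⟩
      · exact h
      · exfalso
        have hwA : w ∈ A := hsub hwD
        rcases hb w u hadj with ⟨_, huB⟩ | ⟨hwB, _⟩
        · exact hd u hu huB
        · exact hd w hwA hwB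
  have h1 : IsMinDomSet G V₁ := key V₁ V₂ hmem hnb hbi
  have h2 : IsMinDomSet G V₂ := by
    refine key V₂ V₁ (fun v => (hmem v).symm) (fun v hv hv1 => hnb v hv1 hv) ?_
    intro v w h
    rcases hbi v w h with ⟨hv, hw⟩ | ⟨hv, hw⟩
    · exact Or.inr ⟨hv, hw⟩
    · exact Or.inl ⟨hv, hw⟩
  exact hunm V₁ V₂ h1 h2
end
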